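/- Let κ ≥ 0 and let g : ℝ³ \ {0} → ℝ be given by g(z) = (1 − e^{−κ‖z‖})/(4π‖z‖). Then g is differentiable on ℝ³ \ {0} and its gradient is uniformly bounded: ‖∇g(z)‖ ≤ κ²/(8π) for every z ≠ 0. Consequently the first-order normal-derivative parts of the kernels K₂ and K₃ built from the difference G₀ − G_κ are bounded kernels. -/

import Mathlib

open Real

noncomputable section

/-- The difference kernel `g(z) = (1 − e^{−κ‖z‖})/(4π‖z‖) = (G₀ − G_κ)(x, x+z)`. -/
def diffKernel (κ : ℝ) (z : EuclideanSpace ℝ (Fin 3)) : ℝ :=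
  (1 - Real.exp (-κ * ‖z‖)) / (4 * π * ‖z‖)

/-!
The kernel is radial, `g(z) = φ(‖z‖)` with `φ(r) = (1 − e^{−κr})/(4πr)`, so `‖∇g(z)‖ ≤ |φ'(‖z‖)|`
because the norm is 1-Lipschitz. A direct computation gives
`φ'(r) = −(1 − (1 + κr)e^{−κr})/(4πr²)`, and `0 ≤ 1 − (1 + u)e^{−u} ≤ u²/2` for `u ≥ 0`: the
lower bound is `1 + u ≤ eᵘ`, the upper one holds because the derivative `u e^{−u}` of the middle
term is at most `u`.
-/

section RadialFunctions

variable {E : Type*} [NormedAddCommGroup E] [InnerProductSpace ℝ E]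
  {φ : ℝ → ℝ} {φ' : ℝ} {z : E}

theorem hasFDerivAt_comp_norm (hz : z ≠ 0) (hφ : HasDerivAt φ φ' ‖z‖) :
    HasFDerivAt (fun x : E => φ ‖x‖) (φ' • fderiv ℝ (‖·‖) z) z :=
  hφ.comp_hasFDerivAt z ((contDiffAt_norm ℝ hz).differentiableAt one_ne_zero).hasFDerivAt

theorem norm_gradient_comp_norm_le [CompleteSpace E] (hz : z ≠ 0) (hφ : HasDerivAt φ φ' ‖z‖) :
    ‖gradient (fun x : E => φ ‖x‖) z‖ ≤ |φ'| := by
  have hnorm : ‖fderiv ℝ (‖·‖) z‖ ≤ 1 := by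
    simpa using norm_fderiv_le_of_lipschitz ℝ (x₀ := z) lipschitzWith_one_norm
  calc ‖gradient (fun x : E => φ ‖x‖) z‖
      = ‖fderiv ℝ (fun x : E => φ ‖x‖) z‖ := by
        rw [← toDual_gradient, LinearIsometryEquiv.norm_map]
    _ = |φ'| * ‖fderiv ℝ (‖·‖) z‖ := by
        rw [(hasFDerivAt_comp_norm hz hφ).fderiv, norm_smul, Real.norm_eq_abs]
    _ ≤ |φ'| := mul_le_of_le_one_right (abs_nonneg _) hnorm

end RadialFunctions

theorem one_sub_one_add_mul_exp_neg_nonneg (u : ℝ) : 0 ≤ 1 - (1 + u) * exp (-u) := by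
  have h : (1 + u) * exp (-u) ≤ exp u * exp (-u) :=
    mul_le_mul_of_nonneg_right (by linarith [add_one_le_exp u]) (exp_nonneg _)
  rw [← exp_add, add_neg_cancel, exp_zero] at h
  linarith

theorem one_sub_one_add_mul_exp_neg_le {u : ℝ} (hu : 0 ≤ u) :
    1 - (1 + u) * exp (-u) ≤ u ^ 2 / 2 := by
  let F : ℝ → ℝ := fun x => x ^ 2 / 2 - 1 + (1 + x) * exp (-x)
  have hF : ∀ x, HasDerivAt F (x * (1 - exp (-x))) x := fun x => by
    refine ((((hasDerivAt_pow 2 x).div_const 2).sub_const 1).add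
      (((hasDerivAt_id x).const_add 1).mul (hasDerivAt_neg x).exp)).congr_deriv ?_
    simp only [id, Nat.cast_ofNat]
    ring
  have hF_mono : MonotoneOn F (Set.Ici 0) := by
    refine monotoneOn_of_deriv_nonneg (convex_Ici 0)
      (fun x _ => (hF x).continuousAt.continuousWithinAt)
      (fun x _ => (hF x).differentiableAt.differentiableWithinAt) fun x hx => ?_
    rw [interior_Ici, Set.mem_Ioi] at hx
    rw [(hF x).deriv]
    exact mul_nonneg hx.le (sub_nonneg.2 (exp_le_one_iff.2 (by linarith)))
  have := hF_mono Set.self_mem_Ici (Set.mem_Ici.2 hu) hu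
  simp only [F] at this
  norm_num at this
  linarith

def diffKernelProfile (κ r : ℝ) : ℝ :=
  (1 - exp (-κ * r)) / (4 * π * r)

theorem hasDerivAt_diffKernelProfile (κ : ℝ) {r : ℝ} (hr : r ≠ 0) :
    HasDerivAt (diffKernelProfile κ)
      (-(1 - (1 + κ * r) * exp (-(κ * r))) / (4 * π * r ^ 2)) r := by
  have hnum : HasDerivAt (fun r => 1 - exp (-κ * r)) (κ * exp (-κ * r)) r := by
    refine ((((hasDerivAt_id r).const_mul (-κ)).exp).const_sub 1).congr_deriv ?_
    simp only [id, mul_one]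
    ring
  have hden : HasDerivAt (fun r => 4 * π * r) (4 * π) r := by
    simpa using (hasDerivAt_id r).const_mul (4 * π)
  refine (hnum.div hden (by positivity)).congr_deriv ?_
  rw [neg_mul]
  field_simp
  ring

theorem abs_deriv_diffKernelProfile_le {κ r : ℝ} (hκ : 0 ≤ κ) (hr : 0 < r) :
    |-(1 - (1 + κ * r) * exp (-(κ * r))) / (4 * π * r ^ 2)| ≤ κ ^ 2 / (8 * π) := by
  have hpos : 0 < 4 * π * r ^ 2 := by positivity
  rw [abs_div, abs_neg, abs_of_nonneg (one_sub_one_add_mul_exp_neg_nonneg _), abs_of_pos hpos,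
    div_le_iff₀ hpos]
  calc 1 - (1 + κ * r) * exp (-(κ * r)) ≤ (κ * r) ^ 2 / 2 :=
        one_sub_one_add_mul_exp_neg_le (mul_nonneg hκ hr.le)
    _ = κ ^ 2 / (8 * π) * (4 * π * r ^ 2) := by field_simp; ring

/-- For `κ ≥ 0`, the kernel `g(z) = (1 − e^{−κ‖z‖})/(4π‖z‖)` is differentiable away from the
origin, with uniformly bounded gradient: `‖∇g(z)‖ ≤ κ²/(8π)` for every `z ≠ 0`. -/
theorem diffKernel_gradient_bounded (κ : ℝ) (hκ : 0 ≤ κ) :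
    DifferentiableOn ℝ (diffKernel κ) {(0 : EuclideanSpace ℝ (Fin 3))}ᶜ ∧
    ∀ z : EuclideanSpace ℝ (Fin 3), z ≠ 0 →
      ‖gradient (diffKernel κ) z‖ ≤ κ ^ 2 / (8 * π) := by
  have hprofile (z : EuclideanSpace ℝ (Fin 3)) (hz : z ≠ 0) :=
    hasDerivAt_diffKernelProfile κ (norm_ne_zero_iff.2 hz)
  refine ⟨fun z hz => ?_, fun z hz => ?_⟩
  · exact (hasFDerivAt_comp_norm hz (hprofile z hz)).differentiableAt.differentiableWithinAt
  · exact (norm_gradient_comp_norm_le hz (hprofile z hz)).trans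
      (abs_deriv_diffKernelProfile_le hκ (norm_pos_iff.2 hz))

end
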